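/- (One-step bound for MWRBK with factor δ) Let A ∈ ℝ^{m×p} have all rows nonzero, B ∈ ℝ^{q×n}, C ∈ ℝ^{m×n}, and let X⋆ ∈ ℝ^{p×q} satisfy A X⋆ B = C. Let 0 < α < 2/‖B‖². Let σ_A > 0 satisfy ‖A v‖ ≥ σ_A ‖v‖ for every v in the column space of Aᵀ, and σ_B > 0 satisfy ‖Bᵀ w‖ ≥ σ_B ‖w‖ for every w in the column space of B. Let X ∈ ℝ^{p×q} be such that every column of X − X⋆ lies in the column space of Aᵀ and every column of (X − X⋆)ᵀ lies in the column space of B. Set R = C − A X B and let i⋆ be an index maximizing ‖R_{i,:}‖²/‖A_{i,:}‖² over i ∈ {1,…,m}. Then the step X⁺ = X + (α/‖A_{i⋆,:}‖²) A_{i⋆,:}ᵀ R_{i⋆,:} Bᵀ satisfies ‖X⁺ − X⋆‖_F² ≤ δ ‖X − X⋆‖_F², where δ = 1 − ((2α − α²‖B‖²)/‖A‖_F²) σ_A² σ_B². -/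

import Mathlib

open Matrix Finset Filter Topology

/-- Squared Euclidean norm of a vector. -/
noncomputable def vnormSq {k : ℕ} (v : Fin k → ℝ) : ℝ := ∑ j, (v j) ^ 2

/-- Squared Frobenius norm of a matrix. -/
noncomputable def frobSq {a b : ℕ} (X : Matrix (Fin a) (Fin b) ℝ) : ℝ := ∑ i, ∑ j, (X i j) ^ 2

/-- Frobenius norm of a matrix. -/
noncomputable def frobNorm {a b : ℕ} (X : Matrix (Fin a) (Fin b) ℝ) : ℝ := Real.sqrt (frobSq X)

/-- Frobenius (trace) inner product `⟨X, Y⟩_F = tr(Xᵀ Y)`. -/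
noncomputable def frobInner {a b : ℕ} (X Y : Matrix (Fin a) (Fin b) ℝ) : ℝ := Matrix.trace (Xᵀ * Y)

/-- Spectral (operator 2-) norm of a matrix. -/
noncomputable def specNorm {a b : ℕ} (B : Matrix (Fin a) (Fin b) ℝ) : ℝ :=
  ‖LinearMap.toContinuousLinearMap (Matrix.toEuclideanLin B)‖

/-- `Mp` is the Moore–Penrose pseudoinverse of `M`: the four Penrose conditions. -/
def IsMPInv {a b : ℕ} (M : Matrix (Fin a) (Fin b) ℝ) (Mp : Matrix (Fin b) (Fin a) ℝ) : Prop :=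
  M * Mp * M = M ∧ Mp * M * Mp = Mp ∧ (M * Mp)ᵀ = M * Mp ∧ (Mp * M)ᵀ = Mp * M

lemma vnormSq_nonneg {k : ℕ} (v : Fin k → ℝ) : 0 ≤ vnormSq v :=
  Finset.sum_nonneg fun _ _ => sq_nonneg _

lemma vnormSq_pos {k : ℕ} {v : Fin k → ℝ} (h : v ≠ 0) : 0 < vnormSq v := by
  rcases (vnormSq_nonneg v).lt_or_eq with h1 | h1
  · exact h1
  · exfalso; apply h; funext i
    have := (Finset.sum_eq_zero_iff_of_nonneg (fun i _ => sq_nonneg (v i))).1 h1.symm i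
      (Finset.mem_univ i)
    exact pow_eq_zero_iff (by norm_num) |>.1 this

lemma vnormSq_eq_norm_sq {k : ℕ} (v : Fin k → ℝ) :
    vnormSq v = ‖(WithLp.equiv 2 (Fin k → ℝ)).symm v‖ ^ 2 := by
  rw [EuclideanSpace.norm_eq, Real.sq_sqrt (by positivity)]
  simp [vnormSq, sq_abs]

lemma vnormSq_mulVec_le {a b : ℕ} (M : Matrix (Fin a) (Fin b) ℝ) (x : Fin b → ℝ) :
    vnormSq (M *ᵥ x) ≤ specNorm M ^ 2 * vnormSq x := by
  have h := (LinearMap.toContinuousLinearMap (Matrix.toEuclideanLin M)).le_opNorm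
    ((WithLp.equiv 2 (Fin b → ℝ)).symm x)
  have h2 : (LinearMap.toContinuousLinearMap (Matrix.toEuclideanLin M))
      ((WithLp.equiv 2 (Fin b → ℝ)).symm x) = (WithLp.equiv 2 (Fin a → ℝ)).symm (M *ᵥ x) := by
    simp [LinearMap.coe_toContinuousLinearMap', Matrix.toEuclideanLin_apply]
  rw [h2] at h
  have hn : ‖(WithLp.equiv 2 (Fin a → ℝ)).symm (M *ᵥ x)‖
      ≤ specNorm M * ‖(WithLp.equiv 2 (Fin b → ℝ)).symm x‖ := h
  rw [vnormSq_eq_norm_sq, vnormSq_eq_norm_sq x]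
  calc ‖(WithLp.equiv 2 (Fin a → ℝ)).symm (M *ᵥ x)‖ ^ 2
      ≤ (specNorm M * ‖(WithLp.equiv 2 (Fin b → ℝ)).symm x‖) ^ 2 :=
        pow_le_pow_left₀ (norm_nonneg _) hn 2
    _ = specNorm M ^ 2 * ‖(WithLp.equiv 2 (Fin b → ℝ)).symm x‖ ^ 2 := by ring

lemma sq_bound {k l : ℕ} {σ : ℝ} (hσ : 0 ≤ σ) {v : Fin k → ℝ} {w : Fin l → ℝ}
    (h : σ * Real.sqrt (vnormSq v) ≤ Real.sqrt (vnormSq w)) :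
    σ ^ 2 * vnormSq v ≤ vnormSq w := by
  have := pow_le_pow_left₀ (by positivity) h 2
  rwa [mul_pow, Real.sq_sqrt (vnormSq_nonneg _), Real.sq_sqrt (vnormSq_nonneg _)] at this

/-- One-step bound for the MWRBK (maximal weighted residual) step with the RBK factor `δ`. -/
theorem stmt14 {m p q n : ℕ}
    (A : Matrix (Fin m) (Fin p) ℝ) (hrows : ∀ i : Fin m, A i ≠ 0)
    (B : Matrix (Fin q) (Fin n) ℝ) (C : Matrix (Fin m) (Fin n) ℝ)
    (Xstar : Matrix (Fin p) (Fin q) ℝ) (hsol : A * Xstar * B = C)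
    (α : ℝ) (hα1 : 0 < α) (hα2 : α < 2 / specNorm B ^ 2)
    (σA σB : ℝ) (hσA : 0 < σA) (hσB : 0 < σB)
    (hA : ∀ v : Fin p → ℝ, (∃ u : Fin m → ℝ, v = Aᵀ *ᵥ u) →
      σA * Real.sqrt (vnormSq v) ≤ Real.sqrt (vnormSq (A *ᵥ v)))
    (hB : ∀ w : Fin q → ℝ, (∃ u : Fin n → ℝ, w = B *ᵥ u) →
      σB * Real.sqrt (vnormSq w) ≤ Real.sqrt (vnormSq (Bᵀ *ᵥ w)))
    (X : Matrix (Fin p) (Fin q) ℝ)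
    (hcol : ∀ j : Fin q, ∃ u : Fin m → ℝ, (fun i => (X - Xstar) i j) = Aᵀ *ᵥ u)
    (hrow : ∀ i : Fin p, ∃ w : Fin n → ℝ, (X - Xstar) i = B *ᵥ w)
    (R : Matrix (Fin m) (Fin n) ℝ) (hRdef : R = C - A * X * B)
    (istar : Fin m)
    (hmax : ∀ i : Fin m,
      vnormSq (R i) / vnormSq (A i) ≤ vnormSq (R istar) / vnormSq (A istar)) :
    frobSq (X + (α / vnormSq (A istar)) • vecMulVec (A istar) (B *ᵥ (R istar)) - Xstar)
      ≤ (1 - ((2 * α - α ^ 2 * specNorm B ^ 2) / frobSq A) * (σA ^ 2 * σB ^ 2))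
          * frobSq (X - Xstar) := by
  set E := X - Xstar with hE
  set u := A istar with hu
  set r := R istar with hr
  set v := B *ᵥ r with hv
  set na := vnormSq u with hna
  set c := α / na with hc
  have hna_pos : 0 < na := vnormSq_pos (hrows istar)
  have key : X + c • vecMulVec u v - Xstar = E + c • vecMulVec u v := by
    ext i j
    simp [hE, Matrix.sub_apply, Matrix.add_apply]
    ring
  -- A * E * B = -R
  have hAEB : A * E * B = -R := by
    have h1 : A * E * B = A * X * B - A * Xstar * B := by
      rw [hE, Matrix.mul_sub, Matrix.sub_mul]
    rw [h1, hsol, hRdef, neg_sub]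
  -- cross term
  have hS : ∑ i, ∑ j, E i j * (u i * v j) = - vnormSq r := by
    have h1 : ∑ i, ∑ j, E i j * (u i * v j) = u ⬝ᵥ (E *ᵥ v) := by
      simp only [dotProduct, mulVec, Finset.mul_sum]
      refine Finset.sum_congr rfl fun i _ => Finset.sum_congr rfl fun j _ => by ring
    rw [h1, hv, dotProduct_mulVec, dotProduct_mulVec, vecMul_vecMul]
    have h2 : u ᵥ* (E * B) = (A * (E * B)) istar := by
      rw [hu]
      funext k
      simp [vecMul, mul_apply, dotProduct]
    rw [h2, ← Matrix.mul_assoc, hAEB]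
    simp [dotProduct, vnormSq, hr, sq]
  -- expansion of the Frobenius norm
  have expand : frobSq (E + c • vecMulVec u v)
      = frobSq E + 2 * c * (∑ i, ∑ j, E i j * (u i * v j)) + c ^ 2 * (na * vnormSq v) := by
    have h1 : na * vnormSq v = ∑ i, ∑ j, u i ^ 2 * v j ^ 2 := by
      rw [hna]
      simp only [vnormSq]
      rw [Finset.sum_mul_sum]
    rw [h1]
    simp only [frobSq, Matrix.add_apply, Matrix.smul_apply, Matrix.vecMulVec_apply,
      smul_eq_mul, Finset.mul_sum]
    rw [← Finset.sum_add_distrib, ← Finset.sum_add_distrib]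
    refine Finset.sum_congr rfl fun i _ => ?_
    rw [← Finset.sum_add_distrib, ← Finset.sum_add_distrib]
    refine Finset.sum_congr rfl fun j _ => by ring
  -- max property
  have hmax2 : frobSq R ≤ frobSq A * (vnormSq r / na) := by
    have hstep : ∀ i, vnormSq (R i) ≤ vnormSq (A i) * (vnormSq r / na) := by
      intro i
      have hAi := vnormSq_pos (hrows i)
      calc vnormSq (R i) = vnormSq (R i) / vnormSq (A i) * vnormSq (A i) := by
            field_simp
        _ ≤ vnormSq r / na * vnormSq (A i) :=
            mul_le_mul_of_nonneg_right (hmax i) hAi.le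
        _ = vnormSq (A i) * (vnormSq r / na) := by ring
    calc frobSq R = ∑ i, vnormSq (R i) := by simp [frobSq, vnormSq]
      _ ≤ ∑ i, vnormSq (A i) * (vnormSq r / na) := Finset.sum_le_sum fun i _ => hstep i
      _ = (∑ i, vnormSq (A i)) * (vnormSq r / na) := by rw [← Finset.sum_mul]
      _ = frobSq A * (vnormSq r / na) := by simp [frobSq, vnormSq]
  -- lower bound on frobSq R
  have hEB : σB ^ 2 * frobSq E ≤ frobSq (E * B) := by
    have hstep : ∀ i, σB ^ 2 * vnormSq (E i) ≤ vnormSq ((E * B) i) := by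
      intro i
      have h1 : (E * B) i = Bᵀ *ᵥ (E i) := by
        funext j
        simp [mul_apply, mulVec, dotProduct, transpose_apply, mul_comm]
      rw [h1]
      exact sq_bound hσB.le (hB (E i) (hrow i))
    calc σB ^ 2 * frobSq E = ∑ i, σB ^ 2 * vnormSq (E i) := by
          simp [frobSq, vnormSq, Finset.mul_sum]
      _ ≤ ∑ i, vnormSq ((E * B) i) := Finset.sum_le_sum fun i _ => hstep i
      _ = frobSq (E * B) := by simp [frobSq, vnormSq]
  choose U hU using hcol
  have hEfact : E = Aᵀ * (Matrix.of fun k j => U j k) := by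
    ext i j
    have := congrFun (hU j) i
    simpa [mul_apply, mulVec, dotProduct] using this
  have hcolEB : ∀ j : Fin n, ∃ w : Fin m → ℝ, (fun i => (E * B) i j) = Aᵀ *ᵥ w := by
    intro j
    refine ⟨(Matrix.of fun k j => U j k) *ᵥ (fun k => B k j), ?_⟩
    have h1 : (fun i => (E * B) i j) = E *ᵥ (fun k => B k j) := by
      funext i; simp [mul_apply, mulVec, dotProduct]
    rw [h1, hEfact, ← Matrix.mulVec_mulVec]
  have hAEBlow : σA ^ 2 * frobSq (E * B) ≤ frobSq (A * (E * B)) := by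
    have hstep : ∀ j, σA ^ 2 * vnormSq (fun i => (E * B) i j)
        ≤ vnormSq (fun i => (A * (E * B)) i j) := by
      intro j
      have h1 : (fun i => (A * (E * B)) i j) = A *ᵥ (fun k => (E * B) k j) := by
        funext i; simp [mul_apply, mulVec, dotProduct]
      rw [h1]
      exact sq_bound hσA.le (hA _ (hcolEB j))
    calc σA ^ 2 * frobSq (E * B) = ∑ j, σA ^ 2 * vnormSq (fun i => (E * B) i j) := by
          simp only [frobSq, vnormSq, Finset.mul_sum]
          rw [Finset.sum_comm]
      _ ≤ ∑ j, vnormSq (fun i => (A * (E * B)) i j) := Finset.sum_le_sum fun j _ => hstep j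
      _ = frobSq (A * (E * B)) := by
          simp only [frobSq, vnormSq]
          rw [Finset.sum_comm]
  have hRlow : σA ^ 2 * σB ^ 2 * frobSq E ≤ frobSq R := by
    have hfr : frobSq R = frobSq (A * (E * B)) := by
      rw [← Matrix.mul_assoc, hAEB]
      simp [frobSq, Matrix.neg_apply]
    rw [hfr]
    nlinarith [hEB, hAEBlow, sq_nonneg σA]
  -- positivity facts
  have hfA : 0 < frobSq A := by
    have hle : na ≤ frobSq A := by
      have := Finset.single_le_sum (f := fun i => vnormSq (A i))
        (fun i _ => vnormSq_nonneg (A i)) (Finset.mem_univ istar)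
      calc na = vnormSq (A istar) := by rw [hna, hu]
        _ ≤ ∑ i, vnormSq (A i) := this
        _ = frobSq A := by simp [frobSq, vnormSq]
    linarith
  have hs0 : 0 ≤ specNorm B ^ 2 := sq_nonneg _
  have hτpos : 0 < 2 * α - α ^ 2 * specNorm B ^ 2 := by
    rcases hs0.eq_or_lt with h0 | h0
    · have h1 : α ^ 2 * specNorm B ^ 2 = 0 := by rw [← h0, mul_zero]
      linarith
    · have h2 : α * specNorm B ^ 2 < 2 := (lt_div_iff₀ h0).1 hα2
      have h3 : α * (α * specNorm B ^ 2) < α * 2 := mul_lt_mul_of_pos_left h2 hα1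
      have h4 : α ^ 2 * specNorm B ^ 2 = α * (α * specNorm B ^ 2) := by ring
      linarith
  -- combine
  have ht : σA ^ 2 * σB ^ 2 * frobSq E / frobSq A ≤ vnormSq r / na := by
    rw [div_le_iff₀ hfA]
    calc σA ^ 2 * σB ^ 2 * frobSq E ≤ frobSq R := hRlow
      _ ≤ frobSq A * (vnormSq r / na) := hmax2
      _ = vnormSq r / na * frobSq A := by ring
  have hnv : vnormSq v ≤ specNorm B ^ 2 * vnormSq r := vnormSq_mulVec_le B r
  have hfE : 0 ≤ frobSq E := Finset.sum_nonneg fun i _ =>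
    Finset.sum_nonneg fun j _ => sq_nonneg _
  rw [key, expand, hS]
  have step1 : frobSq E + 2 * c * (- vnormSq r) + c ^ 2 * (na * vnormSq v)
      ≤ frobSq E - (2 * α - α ^ 2 * specNorm B ^ 2) * (vnormSq r / na) := by
    have h1 : c * vnormSq r = α * (vnormSq r / na) := by rw [hc]; field_simp
    have h2 : c ^ 2 * (na * vnormSq v) ≤ α ^ 2 * specNorm B ^ 2 * (vnormSq r / na) := by
      have e1 : c ^ 2 * (na * vnormSq v) = α ^ 2 / na * vnormSq v := by
        rw [hc]; field_simp
      rw [e1]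
      calc α ^ 2 / na * vnormSq v ≤ α ^ 2 / na * (specNorm B ^ 2 * vnormSq r) :=
            mul_le_mul_of_nonneg_left hnv (by positivity)
        _ = α ^ 2 * specNorm B ^ 2 * (vnormSq r / na) := by field_simp
    linarith [h1, h2]
  have step2 : frobSq E - (2 * α - α ^ 2 * specNorm B ^ 2) * (vnormSq r / na)
      ≤ frobSq E
        - (2 * α - α ^ 2 * specNorm B ^ 2) * (σA ^ 2 * σB ^ 2 * frobSq E / frobSq A) := by
    have := mul_le_mul_of_nonneg_left ht hτpos.le
    linarith
  have step3 : frobSq E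
        - (2 * α - α ^ 2 * specNorm B ^ 2) * (σA ^ 2 * σB ^ 2 * frobSq E / frobSq A)
      = (1 - (2 * α - α ^ 2 * specNorm B ^ 2) / frobSq A * (σA ^ 2 * σB ^ 2)) * frobSq E := by
    field_simp
  linarith [step1, step2, step3.le, step3.ge]
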